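/- arXiv:0706.1385 — 3 statements merged into one kernel-verified Lean document; each statement's English description precedes it below -/
import Mathlib

section
/- Let (X, M, ∗) be a fuzzy metric space, g : X → X bijective, φ ∈ Φ, f : X → X a fuzzy (g,φ)-contraction, and set h = g⁻¹ ∘ f. Then for all x, y ∈ X, every t > 1, and every n ≥ 1: Mᵍ(hⁿ x, hⁿ y, φⁿ(t)) > 1 − φⁿ(t). -/
open Filter Topology Set

/-- A continuous t-norm on `[0,1]`. -/
structure IsContTNorm (star : ℝ → ℝ → ℝ) : Prop where
  mem : ∀ a ∈ Icc (0:ℝ) 1, ∀ b ∈ Icc (0:ℝ) 1, star a b ∈ Icc (0:ℝ) 1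
  comm : ∀ a b : ℝ, star a b = star b a
  assoc : ∀ a b c : ℝ, star (star a b) c = star a (star b c)
  one_star : ∀ a ∈ Icc (0:ℝ) 1, star 1 a = a
  mono : ∀ a b c d : ℝ, a ≤ c → b ≤ d → star a b ≤ star c d
  continuous : ContinuousOn (fun p : ℝ × ℝ => star p.1 p.2) (Icc 0 1 ×ˢ Icc 0 1)

/-- `(X, M, star)` is a fuzzy metric space (George–Veeramani style axioms). -/
structure IsFuzzyMetric {X : Type*} (star : ℝ → ℝ → ℝ) (M : X → X → ℝ → ℝ) : Prop where
  mem : ∀ (x y : X) (t : ℝ), 0 ≤ t → M x y t ∈ Icc (0:ℝ) 1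
  zero : ∀ x y : X, M x y 0 = 0
  pos : ∀ (x y : X) (t : ℝ), 0 < t → 0 < M x y t
  one_iff : ∀ x y : X, (∀ t : ℝ, 0 < t → M x y t = 1) ↔ x = y
  symm : ∀ (x y : X) (t : ℝ), M x y t = M y x t
  tri : ∀ (x y z : X) (s t : ℝ), 0 < s → 0 < t →
    star (M x y s) (M y z t) ≤ M x z (s + t)
  cont : ∀ x y : X, ContinuousOn (M x y) (Ioi 0)

/-- The class `Φ`: nondecreasing, right continuous maps `φ : [0,∞) → [0,∞)` whose
iterates tend to `0` on every `t > 0`. -/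
structure MemPhi (φ : ℝ → ℝ) : Prop where
  nonneg : ∀ t : ℝ, 0 ≤ t → 0 ≤ φ t
  mono : ∀ s t : ℝ, 0 ≤ s → s ≤ t → φ s ≤ φ t
  rightCont : ∀ t : ℝ, 0 ≤ t → ContinuousWithinAt φ (Ici t) t
  iter_tendsto : ∀ t : ℝ, 0 < t → Tendsto (fun n => φ^[n] t) atTop (𝓝 0)

/-- `f` is a fuzzy `(g, φ)`-contraction on `(X, M)`. -/
def FuzzyGContraction {X : Type*} (M : X → X → ℝ → ℝ) (g f : X → X) (φ : ℝ → ℝ) : Prop :=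
  ∀ (x y : X) (t : ℝ), 0 < t → 1 - t < M (g x) (g y) t → 1 - φ t < M (f x) (f y) (φ t)

/-- Fuzzy convergence of a sequence `u` to `a`. -/
def FuzzyConv {X : Type*} (M : X → X → ℝ → ℝ) (u : ℕ → X) (a : X) : Prop :=
  ∀ t : ℝ, 0 < t → Tendsto (fun n => M (u n) a t) atTop (𝓝 1)

/-- Fuzzy Cauchy sequence. -/
def FuzzyCauchy {X : Type*} (M : X → X → ℝ → ℝ) (u : ℕ → X) : Prop :=
  ∀ t : ℝ, 0 < t → Tendsto (fun p : ℕ × ℕ => M (u p.1) (u p.2) t) atTop (𝓝 1)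

/-- Completeness of a fuzzy metric. -/
def FuzzyComplete {X : Type*} (M : X → X → ℝ → ℝ) : Prop :=
  ∀ u : ℕ → X, FuzzyCauchy M u → ∃ a : X, FuzzyConv M u a

/-- The condition `sup_{a<1} (a ∗ a) = 1`. -/
def SupTNorm (star : ℝ → ℝ → ℝ) : Prop :=
  sSup ((fun a => star a a) '' Ico (0:ℝ) 1) = 1

theorem stmt9 {X : Type*} [Nonempty X] (star : ℝ → ℝ → ℝ) (M : X → X → ℝ → ℝ)
    (h1 : IsContTNorm star) (h2 : IsFuzzyMetric star M)
    (g f : X → X) (hg : Function.Bijective g) (φ : ℝ → ℝ) (hφ : MemPhi φ)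
    (hf : FuzzyGContraction M g f φ)
    (x y : X) (t : ℝ) (ht : 1 < t) (n : ℕ) (hn : 1 ≤ n) :
    1 - φ^[n] t <
      M (g ((Function.invFun g ∘ f)^[n] x)) (g ((Function.invFun g ∘ f)^[n] y)) (φ^[n] t) := by
  have hginv : ∀ z, g (Function.invFun g z) = z :=
    Function.rightInverse_invFun hg.surjective
  have hiter_nonneg : ∀ m : ℕ, 0 ≤ φ^[m] t := by
    intro m
    induction m with
    | zero => simp; linarith
    | succ k ih => rw [Function.iterate_succ_apply']; exact hφ.nonneg _ ih
  induction n, hn using Nat.le_induction with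
  | base =>
      simp only [Function.iterate_one, Function.comp_apply, hginv]
      exact hf x y t (by linarith) (by
        have := (h2.mem (g x) (g y) t (by linarith)).1
        linarith)
  | succ k hk ih =>
      have hkpos : 0 < φ^[k] t := by
        rcases lt_or_eq_of_le (hiter_nonneg k) with h | h
        · exact h
        · exfalso
          rw [← h, h2.zero] at ih
          linarith
      have := hf (((Function.invFun g ∘ f)^[k]) x) (((Function.invFun g ∘ f)^[k]) y)
        (φ^[k] t) hkpos ih
      rw [Function.iterate_succ_apply', Function.iterate_succ_apply',
        Function.iterate_succ_apply' (Function.invFun g ∘ f)]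
      simpa only [Function.comp_apply, hginv] using this
end

section
/- Let (X, M, ∗) be a fuzzy metric space, g : X → X bijective, φ ∈ Φ, f a fuzzy (g,φ)-contraction, h = g⁻¹ ∘ f, and x₀ ∈ X. Define xₙ₊₁ = h xₙ. Then (xₙ) is a fuzzy Cauchy sequence with respect to Mᵍ: for every ε > 0 and λ ∈ (0,1) there exists N such that Mᵍ(x_{n+p}, xₙ, ε) > 1 − λ for all n ≥ N and p ≥ 1. -/
open Filter Topology Set

theorem stmt10 {X : Type*} [Nonempty X] (star : ℝ → ℝ → ℝ) (M : X → X → ℝ → ℝ)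
    (h1 : IsContTNorm star) (h2 : IsFuzzyMetric star M)
    (g f : X → X) (hg : Function.Bijective g) (φ : ℝ → ℝ) (hφ : MemPhi φ)
    (hf : FuzzyGContraction M g f φ)
    (x : ℕ → X) (hrec : ∀ n : ℕ, x (n + 1) = (Function.invFun g ∘ f) (x n)) :
    ∀ ε : ℝ, 0 < ε → ∀ l ∈ Ioo (0:ℝ) 1, ∃ N : ℕ, ∀ n : ℕ, N ≤ n → ∀ p : ℕ, 1 ≤ p →
      1 - l < M (g (x (n + p))) (g (x n)) ε := by
  have mono : ∀ (a b : X) (s t : ℝ), 0 < s → s ≤ t → M a b s ≤ M a b t := by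
    intro a b s t hs hst
    rcases eq_or_lt_of_le hst with rfl | h
    · exact le_refl _
    · have h1' : M b b (t - s) = 1 := (h2.one_iff b b).mpr rfl (t - s) (by linarith)
      have htri := h2.tri a b b s (t - s) hs (by linarith)
      rw [h1'] at htri
      have hmem := h2.mem a b s hs.le
      calc M a b s = star 1 (M a b s) := (h1.one_star _ hmem).symm
        _ = star (M a b s) 1 := h1.comm _ _
        _ ≤ M a b (s + (t - s)) := htri
        _ = M a b t := by ring_nf
  have hginv : ∀ z, g (Function.invFun g z) = z := fun z =>
    Function.rightInverse_invFun hg.surjective z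
  have hfx : ∀ m, f (x m) = g (x (m + 1)) := by
    intro m; rw [hrec m]; simp [Function.comp, hginv]
  have key : ∀ p n : ℕ, 0 < φ^[n] 1 ∧
      1 - φ^[n] 1 < M (g (x (n + p))) (g (x n)) (φ^[n] 1) := by
    intro p n
    induction n with
    | zero =>
      refine ⟨one_pos, ?_⟩
      simpa using h2.pos (g (x p)) (g (x 0)) 1 one_pos
    | succ n ih =>
      obtain ⟨hpos, hlt⟩ := ih
      have hc := hf (x (n + p)) (x n) (φ^[n] 1) hpos hlt
      rw [hfx, hfx] at hc
      rw [Function.iterate_succ_apply']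
      have hnn : 0 ≤ φ (φ^[n] 1) := hφ.nonneg _ hpos.le
      have heq : n + p + 1 = n + 1 + p := by omega
      rw [heq] at hc
      rcases hnn.lt_or_eq with hpos' | hzero
      · exact ⟨hpos', hc⟩
      · exfalso
        rw [← hzero, h2.zero] at hc
        linarith
  intro ε hε l hl
  have htend := hφ.iter_tendsto 1 one_pos
  have hev : ∀ᶠ n in atTop, φ^[n] 1 < min ε l :=
    (tendsto_order.1 htend).2 (min ε l) (lt_min hε hl.1)
  obtain ⟨N, hN⟩ := eventually_atTop.1 hev
  refine ⟨N, fun n hn p _ => ?_⟩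
  obtain ⟨hpos, hlt⟩ := key p n
  have hsmall := hN n hn
  have hle : M (g (x (n + p))) (g (x n)) (φ^[n] 1) ≤ M (g (x (n + p))) (g (x n)) ε :=
    mono _ _ _ _ hpos (le_of_lt (lt_of_lt_of_le hsmall (min_le_left _ _)))
  have : φ^[n] 1 < l := lt_of_lt_of_le hsmall (min_le_right _ _)
  linarith
end

section
/- Let (X, M, ∗) be a fuzzy metric space, g bijective, φ ∈ Φ, and f : X → X a fuzzy (g,φ)-contraction. If z, w ∈ X satisfy g z = f z and g w = f w, then f z = f w (hence the coincidence point is unique). -/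
open Filter Topology Set

theorem stmt19 {X : Type*} (star : ℝ → ℝ → ℝ) (M : X → X → ℝ → ℝ)
    (h1 : IsContTNorm star) (h2 : IsFuzzyMetric star M)
    (g f : X → X) (hg : Function.Bijective g) (φ : ℝ → ℝ) (hφ : MemPhi φ)
    (hf : FuzzyGContraction M g f φ)
    (z w : X) (hz : g z = f z) (hw : g w = f w) :
    f z = f w := by
  -- iterates of φ at 2 are nonneg
  have hiter_nonneg : ∀ n : ℕ, 0 ≤ φ^[n] 2 := by
    intro n
    induction n with
    | zero => norm_num
    | succ n ih => rw [Function.iterate_succ_apply']; exact hφ.nonneg _ ih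
  -- φ 0 = 0
  have hφ0 : φ 0 = 0 := by
    by_contra h
    have hc : 0 < φ 0 := lt_of_le_of_ne (hφ.nonneg 0 le_rfl) (Ne.symm h)
    have hle : ∀ k : ℕ, φ 0 ≤ φ^[k] (φ 0) := by
      intro k
      induction k with
      | zero => simp
      | succ k ih =>
        rw [Function.iterate_succ_apply']
        exact hφ.mono 0 _ le_rfl (le_trans (hφ.nonneg 0 le_rfl) ih)
    have htend := hφ.iter_tendsto (φ 0) hc
    have : φ 0 ≤ 0 := ge_of_tendsto' htend hle
    linarith
  -- monotonicity of M in t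
  have Mmono : ∀ (x y : X) (a b : ℝ), 0 < a → a ≤ b → M x y a ≤ M x y b := by
    intro x y a b ha hab
    rcases eq_or_lt_of_le hab with rfl | hlt
    · exact le_refl _
    · have htri := h2.tri x x y (b - a) a (by linarith) ha
      have hxx : M x x (b - a) = 1 := (h2.one_iff x x).mpr rfl (b - a) (by linarith)
      rw [hxx, h1.one_star _ (h2.mem x y a ha.le)] at htri
      have : b - a + a = b := by ring
      rwa [this] at htri
  -- key inductive estimate
  have key : ∀ n : ℕ, 0 < φ^[n] 2 → 1 - φ^[n] 2 < M (g z) (g w) (φ^[n] 2) := by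
    intro n
    induction n with
    | zero =>
      intro _
      simp only [Function.iterate_zero, id]
      have := h2.pos (g z) (g w) 2 (by norm_num)
      linarith
    | succ n ih =>
      intro hpos
      rw [Function.iterate_succ_apply'] at hpos ⊢
      have hn : 0 < φ^[n] 2 := by
        rcases lt_or_eq_of_le (hiter_nonneg n) with h | h
        · exact h
        · exfalso; rw [← h, hφ0] at hpos; exact lt_irrefl 0 hpos
      have := hf z w (φ^[n] 2) hn (ih hn)
      rwa [← hz, ← hw] at this
  -- all iterates are positive
  have hpos_all : ∀ n : ℕ, 0 < φ^[n] 2 := by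
    by_contra h
    push_neg at h
    obtain ⟨n, hn⟩ := h
    have hex : ∃ n, φ^[n] 2 ≤ 0 := ⟨n, hn⟩
    set n0 := Nat.find hex with hn0
    have hfind : φ^[n0] 2 ≤ 0 := Nat.find_spec hex
    have hne : n0 ≠ 0 := by
      intro h0
      rw [h0] at hfind; norm_num at hfind
    obtain ⟨m, hm⟩ := Nat.exists_eq_succ_of_ne_zero hne
    have hmpos : 0 < φ^[m] 2 := by
      have := Nat.find_min hex (show m < n0 by omega)
      push_neg at this; exact this
    have hcontr := hf z w (φ^[m] 2) hmpos (key m hmpos)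
    have hzero : φ (φ^[m] 2) = 0 := by
      have h1' : φ^[m + 1] 2 ≤ 0 := by rw [← Nat.succ_eq_add_one, ← hm]; exact hfind
      rw [Function.iterate_succ_apply'] at h1'
      exact le_antisymm h1' (hφ.nonneg _ (hiter_nonneg m))
    rw [hzero, h2.zero] at hcontr
    linarith
  -- conclude f z = f w
  apply (h2.one_iff (f z) (f w)).mp
  intro s hs
  have hub := (h2.mem (f z) (f w) s hs.le).2
  have hlb : ∀ ε : ℝ, 0 < ε → 1 - ε < M (f z) (f w) s := by
    intro ε hε
    have htend := hφ.iter_tendsto 2 (by norm_num)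
    have hev : ∀ᶠ n in atTop, φ^[n] 2 < min s ε :=
      htend.eventually (gt_mem_nhds (lt_min hs hε))
    obtain ⟨n, hn⟩ := hev.exists
    have hk := key n (hpos_all n)
    rw [hz, hw] at hk
    have hmono := Mmono (f z) (f w) (φ^[n] 2) s (hpos_all n)
      (le_of_lt (lt_of_lt_of_le hn (min_le_left _ _)))
    have : φ^[n] 2 < ε := lt_of_lt_of_le hn (min_le_right _ _)
    linarith
  by_contra hne
  have hlt : M (f z) (f w) s < 1 := lt_of_le_of_ne hub hne
  have := hlb (1 - M (f z) (f w) s) (by linarith)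
  linarith
end
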